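/- arXiv:2504.14370 — 2 statements merged into one kernel-verified Lean document; each statement's English description precedes it below -/
import Mathlib

section
/- There exist a countable collection X = {L_1, L_2, …} of languages and a language K ∈ X with the following property: for every index-based generation algorithm f that guarantees validity for X, there exists an enumeration E of K such that liminf_{t→∞} μ_up(L_{i_t}, K) = 0, where i_t = f(w_1, …, w_t). -/
/-- The finite prefix `[E 0, …, E t]` of the adversary's enumeration. -/
def epref (E : ℕ → ℕ) (t : ℕ) : List ℕ := (List.range (t + 1)).map E

/-- `E` is an enumeration of the language `K`. -/
def IsEnum (E : ℕ → ℕ) (K : Set ℕ) : Prop := Function.Injective E ∧ Set.range E = K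

/-- The upper density of `L` in the infinite set `K`. -/
noncomputable def upperDensity (L K : Set ℕ) : ℝ :=
  Filter.limsup
    (fun N : ℕ => ((Set.ncard {n : ℕ | n < N ∧ Nat.nth (· ∈ K) n ∈ L}) : ℝ) / N)
    Filter.atTop

/-- The index-based generation algorithm `f` guarantees validity for the collection
`L`: on any enumeration of any member of the collection, its guesses are eventually
always subsets of the enumerated language. -/
def GuaranteesValidity (L : ℕ → Set ℕ) (f : List ℕ → ℕ) : Prop :=
  ∀ (i : ℕ) (E : ℕ → ℕ), IsEnum E (L i) →
    ∃ t0 : ℕ, ∀ t ≥ t0, L (f (epref E t)) ⊆ L i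

/-!
Take `K = ℕ` and, besides it, the languages `C ∪ F` with `C` the squares and `F` finite. Against a
valid algorithm the adversary works in rounds. In round `r`, with `F` the numbers listed so far, it
continues its listing along an enumeration of `C ∪ F ∪ {r}`, a member of the collection; validity
makes the guesses eventually lie inside this language, and the round ends at such a time once `r`
has been listed. The limit enumeration lists all of `ℕ`, and at the end of every round the guess
lies in `C ∪ F'` with `F'` finite, a set of density zero in `ℕ` since only `√N` squares lie below
`N`.
-/

open Filter Topology Set

-- No boundedness is needed: in `ℝ` a limsup that is not bounded above is `sInf ∅ = 0`.
lemma limsup_nonneg_of_nonneg {ι : Type*} {l : Filter ι} [NeBot l] {u : ι → ℝ} (hu : ∀ i, 0 ≤ u i) :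
    0 ≤ limsup u l :=
  Real.sInf_nonneg fun _ ha => (hu _).trans (Eventually.exists ha).choose_spec

lemma upperDensity_nonneg (L K : Set ℕ) : 0 ≤ upperDensity L K :=
  limsup_nonneg_of_nonneg fun _ => by positivity

lemma liminf_eq_zero_of_frequently_eq_zero {ι : Type*} {l : Filter ι} {u : ι → ℝ}
    (hu : ∀ i, 0 ≤ u i) (h : ∃ᶠ i in l, u i = 0) : liminf u l = 0 :=
  le_antisymm (liminf_le_of_frequently_le (h.mono fun _ => le_of_eq) (isBoundedUnder_of ⟨0, hu⟩))
    (le_liminf_of_le (IsCoboundedUnder.of_frequently_le (h.mono fun _ => le_of_eq))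
      (Eventually.of_forall hu))

def squares : Set ℕ := range fun k => k * k

lemma squares_infinite : squares.Infinite :=
  infinite_range_of_injective fun _ _ => Nat.mul_self_inj.mp

lemma ncard_squares_lt_le (N : ℕ) : {n | n < N ∧ n ∈ squares}.ncard ≤ N.sqrt + 1 := by
  have hsub : {n | n < N ∧ n ∈ squares} ⊆ (fun k => k * k) '' Iic N.sqrt := by
    rintro _ ⟨hn, k, rfl⟩
    exact ⟨k, Nat.le_sqrt.2 hn.le, rfl⟩
  calc _ ≤ ((fun k => k * k) '' Iic N.sqrt).ncard := ncard_le_ncard hsub ((finite_Iic _).image _)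
    _ ≤ (Iic N.sqrt).ncard := ncard_image_le (finite_Iic _)
    _ = N.sqrt + 1 := by simp

lemma tendsto_sqrt_div_self : Tendsto (fun N : ℕ => (N.sqrt : ℝ) / N) atTop (𝓝 0) := by
  have hsqrt : Tendsto (fun N : ℕ => (N.sqrt : ℝ)) atTop atTop :=
    tendsto_natCast_atTop_atTop.comp <|
      tendsto_atTop_atTop.2 fun b => ⟨b * b, fun _ => Nat.le_sqrt.2⟩
  refine squeeze_zero (fun _ => by positivity) (fun N => ?_) (tendsto_inv_atTop_zero.comp hsqrt)
  rcases Nat.eq_zero_or_pos N.sqrt with h | h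
  · simp [h]
  have hsq : (N.sqrt : ℝ) * N.sqrt ≤ N := by exact_mod_cast Nat.sqrt_le N
  calc (N.sqrt : ℝ) / N ≤ N.sqrt / (N.sqrt * N.sqrt) := by gcongr
    _ = (N.sqrt : ℝ)⁻¹ := by field_simp

lemma upperDensity_univ_eq_zero {M T : Set ℕ} (hT : T.Finite) (hM : M ⊆ squares ∪ T) :
    upperDensity M univ = 0 := by
  have hcount (N : ℕ) : {n | n < N ∧ n ∈ M}.ncard ≤ N.sqrt + 1 + T.ncard := by
    have hsub : {n | n < N ∧ n ∈ M} ⊆ {n | n < N ∧ n ∈ squares} ∪ T := fun n ⟨hn, hnM⟩ =>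
      (hM hnM).imp (fun h => ⟨hn, h⟩) id
    calc _ ≤ ({n | n < N ∧ n ∈ squares} ∪ T).ncard :=
          ncard_le_ncard hsub (((finite_Iio N).subset fun _ h => h.1).union hT)
      _ ≤ {n | n < N ∧ n ∈ squares}.ncard + T.ncard := ncard_union_le _ _
      _ ≤ N.sqrt + 1 + T.ncard := by gcongr; exact ncard_squares_lt_le N
  have hbound :
      Tendsto (fun N : ℕ => (N.sqrt : ℝ) / N + ((1 + T.ncard : ℕ) : ℝ) / N) atTop (𝓝 0) := by
    simpa using tendsto_sqrt_div_self.add (tendsto_const_div_atTop_nhds_zero_nat _)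
  simp only [upperDensity, mem_univ, Nat.nth_true]
  refine (squeeze_zero (fun _ => by positivity) (fun N => ?_) hbound).limsup_eq
  rw [← add_div]
  gcongr
  exact_mod_cast (hcount N).trans_eq (by ring)

lemma isEnum_nth {A : Set ℕ} (hA : A.Infinite) : IsEnum (Nat.nth (· ∈ A)) A :=
  ⟨Nat.nth_injective hA, Nat.range_nth_of_infinite hA⟩

def listThen (l : List ℕ) (g : ℕ → ℕ) (n : ℕ) : ℕ :=
  if h : n < l.length then l[n] else g (n - l.length)

lemma listThen_of_lt {l : List ℕ} (g : ℕ → ℕ) {n : ℕ} (h : n < l.length) : listThen l g n = l[n] :=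
  dif_pos h

lemma listThen_of_le {l : List ℕ} (g : ℕ → ℕ) {n : ℕ} (h : l.length ≤ n) :
    listThen l g n = g (n - l.length) :=
  dif_neg h.not_gt

lemma isEnum_listThen {l : List ℕ} {g : ℕ → ℕ} {B : Set ℕ} (hl : l.Nodup) (hg : IsEnum g B)
    (hdisj : ∀ x ∈ l, x ∉ B) : IsEnum (listThen l g) ({x | x ∈ l} ∪ B) := by
  have hgB (k : ℕ) : g k ∈ B := hg.2 ▸ mem_range_self k
  constructor
  · intro a b hab
    rcases lt_or_ge a l.length with ha | ha <;> rcases lt_or_ge b l.length with hb | hb <;>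
      simp only [listThen_of_lt, listThen_of_le, ha, hb] at hab
    · exact hl.getElem_inj_iff.1 hab
    · exact absurd (hab ▸ hgB _) (hdisj _ (l.getElem_mem ha))
    · exact absurd (hab ▸ hgB _) (hdisj _ (l.getElem_mem hb))
    · have := hg.1 hab
      omega
  · ext x
    constructor
    · rintro ⟨n, rfl⟩
      rcases lt_or_ge n l.length with hn | hn
      · exact .inl (by simp [listThen_of_lt _ hn])
      · exact .inr (by simpa [listThen_of_le _ hn] using hgB _)
    · rintro (hx | hx)
      · obtain ⟨n, hn, rfl⟩ := List.getElem_of_mem hx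
        exact ⟨n, listThen_of_lt _ hn⟩
      · obtain ⟨k, rfl⟩ := hg.2.symm ▸ hx
        exact ⟨l.length + k, by simp [listThen_of_le]⟩

lemma mem_epref {E : ℕ → ℕ} {t x : ℕ} : x ∈ epref E t ↔ ∃ n ≤ t, E n = x := by
  simp [epref]

lemma prefix_epref {E : ℕ → ℕ} {l : List ℕ} (hE : ∀ n (h : n < l.length), E n = l[n]) {t : ℕ}
    (ht : l.length ≤ t + 1) : l <+: epref E t := by
  rw [List.prefix_iff_eq_take]
  refine List.ext_getElem (by simp [epref, ht]) fun n hn _ => ?_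
  simp [epref, hE n hn]

noncomputable def squaresFamily : ℕ → Set ℕ
  | 0 => univ
  | i + 1 => squares ∪ ↑(Denumerable.ofNat (Finset ℕ) i)

lemma squaresFamily_infinite (i : ℕ) : (squaresFamily i).Infinite := by
  cases i with
  | zero => exact infinite_univ
  | succ i => exact squares_infinite.mono subset_union_left

lemma exists_squaresFamily_eq (S : Finset ℕ) : ∃ i, squaresFamily i = squares ∪ ↑S :=
  ⟨Denumerable.eqv _ S + 1, by simp [squaresFamily, Denumerable.eqv]⟩

lemma exists_extension_guess_subset {f : List ℕ → ℕ} (hf : GuaranteesValidity squaresFamily f)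
    {l : List ℕ} (hl : l.Nodup) (x : ℕ) :
    ∃ l' : List ℕ, l'.Nodup ∧ l <+: l' ∧ l.length < l'.length ∧ x ∈ l' ∧
      squaresFamily (f l') ⊆ squares ∪ {y | y ∈ l'} := by
  set S : Finset ℕ := insert x l.toFinset
  set B : Set ℕ := (squares ∪ {x}) \ {y | y ∈ l}
  have hB : B.Infinite := (squares_infinite.mono subset_union_left).sdiff l.finite_toSet
  set E := listThen l (Nat.nth (· ∈ B))
  have hE : IsEnum E (squares ∪ ↑S) := by
    convert isEnum_listThen hl (isEnum_nth hB) fun y hy hyB => hyB.2 hy using 1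
    ext y
    simp only [S, B, Finset.coe_insert, List.coe_toFinset, mem_union, mem_insert_iff, Set.mem_sdiff,
      mem_singleton_iff]
    tauto
  obtain ⟨i, hi⟩ := exists_squaresFamily_eq S
  obtain ⟨t₀, ht₀⟩ := hf i E (hi ▸ hE)
  obtain ⟨k, hk⟩ : x ∈ range E := hE.2 ▸ .inr (Finset.mem_insert_self x _)
  set t := max t₀ (max k l.length)
  have hl' : l <+: epref E t := prefix_epref (fun _ h => listThen_of_lt _ h) (by omega)
  have hx : x ∈ epref E t := mem_epref.2 ⟨k, by omega, hk⟩
  refine ⟨epref E t, List.nodup_range.map hE.1, hl', by simp [epref]; omega, hx, ?_⟩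
  refine (ht₀ t (le_max_left _ _)).trans ?_
  rw [hi]
  refine union_subset_union_right _ fun y hy => ?_
  rcases Finset.mem_insert.1 hy with rfl | hy
  · exact hx
  · exact hl'.subset (List.mem_toFinset.1 hy)

lemma exists_seq_of_forall_exists {α : Type*} {P : α → Prop} {R : ℕ → α → α → Prop} {a : α}
    (ha : P a) (h : ∀ r b, P b → ∃ c, P c ∧ R r b c) :
    ∃ s : ℕ → α, ∀ r, P (s r) ∧ R r (s r) (s (r + 1)) := by
  choose g hgP hgR using h
  let s : ℕ → {b // P b} := fun r => Nat.rec ⟨a, ha⟩ (fun r b => ⟨g r b b.2, hgP r b b.2⟩) r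
  exact ⟨fun r => (s r).1, fun r => ⟨(s r).2, hgR r _ _⟩⟩

lemma exists_enum_of_prefix_chain {c : ℕ → List ℕ} (hnodup : ∀ r, (c r).Nodup)
    (hpre : ∀ r, c r <+: c (r + 1)) (hlen : ∀ r, (c r).length < (c (r + 1)).length)
    (hcover : ∀ x, ∃ r, x ∈ c r) :
    ∃ E, IsEnum E univ ∧ ∀ r, ∃ t ≥ r, epref E t = c (r + 1) := by
  have hmono {r r' : ℕ} (h : r ≤ r') : c r <+: c r' := by
    induction r', h using Nat.le_induction with
    | base => exact List.prefix_rfl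
    | succ r' _ ih => exact ih.trans (hpre r')
  have hlen_ge (r : ℕ) : r ≤ (c r).length := by
    induction r with
    | zero => exact Nat.zero_le _
    | succ r ih => exact (hlen r).trans_le' (by omega)
  set E : ℕ → ℕ := fun n => (c (n + 1)).getD n 0
  have hE (r n : ℕ) (h : n < (c r).length) : E n = (c r)[n] := by
    have hn : n < (c (n + 1)).length := (hlen_ge (n + 1)).trans_lt' (by omega)
    rw [(hmono (le_max_left r (n + 1))).getElem h]
    simp only [E, List.getD_eq_getElem _ _ hn]
    exact (hmono (le_max_right r (n + 1))).getElem hn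
  refine ⟨E, ⟨fun a b hab => ?_, eq_univ_of_forall fun x => ?_⟩, fun r => ?_⟩
  · have hr (n : ℕ) (h : n ≤ max a b) : n < (c (max a b + 1)).length :=
      (hlen_ge _).trans_lt' (by omega)
    rw [hE _ a (hr a (le_max_left a b)), hE _ b (hr b (le_max_right a b))] at hab
    exact (hnodup _).getElem_inj_iff.1 hab
  · obtain ⟨r, hr⟩ := hcover x
    obtain ⟨n, hn, rfl⟩ := List.getElem_of_mem hr
    exact ⟨n, hE r n hn⟩
  · have := hlen_ge (r + 1)
    have hpre := prefix_epref (hE (r + 1)) (t := (c (r + 1)).length - 1) (by omega)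
    refine ⟨_, by omega, (hpre.eq_of_length ?_).symm⟩
    simp only [epref, List.length_map, List.length_range]
    omega

lemma exists_enum_frequently_guess_subset {f : List ℕ → ℕ}
    (hf : GuaranteesValidity squaresFamily f) :
    ∃ E, IsEnum E univ ∧
      ∃ᶠ t in atTop, ∃ T : Set ℕ, T.Finite ∧ squaresFamily (f (epref E t)) ⊆ squares ∪ T := by
  obtain ⟨c, hc⟩ := exists_seq_of_forall_exists List.nodup_nil fun r _ hl =>
    exists_extension_guess_subset hf hl r
  obtain ⟨E, hE, hEc⟩ := exists_enum_of_prefix_chain (fun r => (hc r).1) (fun r => (hc r).2.1)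
    (fun r => (hc r).2.2.1) fun x => ⟨x + 1, (hc x).2.2.2.1⟩
  refine ⟨E, hE, frequently_atTop.2 fun r => ?_⟩
  obtain ⟨t, htr, ht⟩ := hEc r
  exact ⟨t, htr, _, (c (r + 1)).finite_toSet, ht ▸ (hc r).2.2.2.2⟩

/-- There is an instance (a countable collection and a true language `K = L z` in it)
on which every valid index-based generation algorithm has, for some enumeration of
`K`, `liminf_{t→∞} μ_up(L (i_t), K) = 0`. -/
theorem stmt4 :
    ∃ (L : ℕ → Set ℕ) (z : ℕ), (∀ i, (L i).Infinite) ∧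
      ∀ f : List ℕ → ℕ, GuaranteesValidity L f →
        ∃ E : ℕ → ℕ, IsEnum E (L z) ∧
          Filter.liminf (fun t : ℕ => upperDensity (L (f (epref E t))) (L z))
            Filter.atTop = 0 := by
  refine ⟨squaresFamily, 0, squaresFamily_infinite, fun f hf => ?_⟩
  obtain ⟨E, hE, hfreq⟩ := exists_enum_frequently_guess_subset hf
  refine ⟨E, hE, liminf_eq_zero_of_frequently_eq_zero (fun _ => upperDensity_nonneg _ _) ?_⟩
  exact hfreq.mono fun _ ⟨_, hT, hsub⟩ => upperDensity_univ_eq_zero hT hsub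
end

section
/- Let X be a countable collection of languages, K ∈ X, and τ = τ(X, K) its truth index. For every index-based generation algorithm f that guarantees validity for X and every ε > 0, there exists an enumeration E of K such that μ_up(L_{i_t}, K) ≤ τ + ε for infinitely many steps t, where i_t = f(w_1, …, w_t). -/
/-- The sets `B_k` associated with a sequence of languages:
`B_0 = ⋂_i Λ i` and `B_k = (⋂_{i ≥ k} Λ i) \ (B_0 ∪ ⋯ ∪ B_{k-1})`. -/
def towerB (Λ : ℕ → Set ℕ) : ℕ → Set ℕ
  | k => {w | ∀ i, k ≤ i → w ∈ Λ i} \ {w | ∃ m, ∃ _ : m < k, w ∈ towerB Λ m}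

/-- `(Λ 0, Λ 1, …)` is an infinite perfect tower of (pairwise distinct, infinite)
languages with terminal language `K`. -/
structure IsPerfectTower (Λ : ℕ → Set ℕ) (K : Set ℕ) : Prop where
  injective : Function.Injective Λ
  infinite : ∀ j, (Λ j).Infinite
  proper : ∀ j, Λ j ⊂ K
  nonempty : ∀ j, (towerB Λ j).Nonempty
  complete : (⋃ j, towerB Λ j) = K

/- The truth index `τ(X, K)` for the collection `L` and true language `K = L z`:
the infimum of the set `D` of `δ ∈ [0,1]` for which there is an infinite perfect
tower of languages from the collection with terminal language `K` all of whose
languages have upper density at most `δ` in `K`; it equals `1` when `D` is empty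
(in particular when no such tower exists at all). -/
open Classical in
noncomputable def truthIndex (L : ℕ → Set ℕ) (z : ℕ) : ℝ :=
  if ({δ : ℝ | δ ∈ Set.Icc (0 : ℝ) 1 ∧
        ∃ Λ : ℕ → Set ℕ, (∀ j, ∃ i, Λ j = L i) ∧ IsPerfectTower Λ (L z) ∧
          ∀ j, upperDensity (Λ j) (L z) ≤ δ}).Nonempty
  then sInf {δ : ℝ | δ ∈ Set.Icc (0 : ℝ) 1 ∧
        ∃ Λ : ℕ → Set ℕ, (∀ j, ∃ i, Λ j = L i) ∧ IsPerfectTower Λ (L z) ∧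
          ∀ j, upperDensity (Λ j) (L z) ≤ δ}
  else 1

/-!
The adversary builds the enumeration of `K` in rounds, using a perfect tower `Λ` of languages
of density at most `δ < τ + ε`. At the start of a round it has listed a finite prefix `p ⊆ K`;
since the tower exhausts `K`, the prefix together with the next still-missing element of `K`
lies in some `Λ j`. Feeding `p` followed by an enumeration of `Λ j` to the algorithm, validity
forces a guess inside `Λ j`, hence of density at most `δ`, after finitely many steps. The
adversary commits to that finite extension of `p` (long enough to contain the missing element)
and starts the next round. In the limit every element of `K` is listed exactly once, and the
algorithm guessed a language of density at most `δ` once in every round.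
-/

open Filter

noncomputable def densityRatio (L K : Set ℕ) (N : ℕ) : ℝ :=
  ({n : ℕ | n < N ∧ Nat.nth (· ∈ K) n ∈ L}.ncard : ℝ) / N

lemma upperDensity_eq_limsup (L K : Set ℕ) :
    upperDensity L K = limsup (densityRatio L K) atTop :=
  rfl

lemma densityRatio_nonneg (L K : Set ℕ) (N : ℕ) : 0 ≤ densityRatio L K N := by
  unfold densityRatio
  positivity

lemma densityRatio_le_one (L K : Set ℕ) (N : ℕ) : densityRatio L K N ≤ 1 := by
  refine div_le_one_of_le₀ ?_ N.cast_nonneg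
  exact_mod_cast (Set.ncard_le_ncard (fun _ hn => hn.1 : {n : ℕ | n < N ∧ Nat.nth (· ∈ K) n ∈ L}
    ⊆ Set.Iio N) (Set.finite_Iio N)).trans_eq (Set.ncard_Iio_nat N)

lemma densityRatio_mono {L L' : Set ℕ} (K : Set ℕ) (h : L ⊆ L') (N : ℕ) :
    densityRatio L K N ≤ densityRatio L' K N := by
  refine div_le_div_of_nonneg_right ?_ N.cast_nonneg
  have hsub : {n : ℕ | n < N ∧ Nat.nth (· ∈ K) n ∈ L} ⊆ {n | n < N ∧ Nat.nth (· ∈ K) n ∈ L'} :=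
    fun _ hn => ⟨hn.1, h hn.2⟩
  exact_mod_cast Set.ncard_le_ncard hsub ((Set.finite_Iio N).subset fun _ hn => hn.1)

lemma upperDensity_le_one (L K : Set ℕ) : upperDensity L K ≤ 1 := by
  rw [upperDensity_eq_limsup]
  exact limsup_le_of_le (isCoboundedUnder_le_of_le _ (densityRatio_nonneg L K))
    (Eventually.of_forall (densityRatio_le_one L K))

lemma upperDensity_mono {L L' : Set ℕ} (K : Set ℕ) (h : L ⊆ L') :
    upperDensity L K ≤ upperDensity L' K := by
  rw [upperDensity_eq_limsup, upperDensity_eq_limsup]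
  exact limsup_le_limsup (Eventually.of_forall (densityRatio_mono K h))
    (isCoboundedUnder_le_of_le _ (densityRatio_nonneg L K))
    (isBoundedUnder_of_eventually_le (Eventually.of_forall (densityRatio_le_one L' K)))

lemma exists_perfectTower_of_truthIndex_lt {L : ℕ → Set ℕ} {z : ℕ} {c : ℝ}
    (hc : truthIndex L z < c) (hc1 : c ≤ 1) :
    ∃ Λ : ℕ → Set ℕ, (∀ j, ∃ i, Λ j = L i) ∧ IsPerfectTower Λ (L z) ∧
      ∀ j, upperDensity (Λ j) (L z) ≤ c := by
  unfold truthIndex at hc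
  split_ifs at hc with hD
  · obtain ⟨δ, ⟨-, Λ, hΛL, hΛ, hdens⟩, hδc⟩ := exists_lt_of_csInf_lt hD hc
    exact ⟨Λ, hΛL, hΛ, fun j => (hdens j).trans hδc.le⟩
  · linarith

lemma eventually_subset_of_subset_iUnion_towerB {Λ : ℕ → Set ℕ} {s : Set ℕ} (hs : s.Finite)
    (hsΛ : s ⊆ ⋃ j, towerB Λ j) : ∀ᶠ i in atTop, s ⊆ Λ i := by
  refine hs.eventually_all.2 fun x hx => ?_
  obtain ⟨j, hj⟩ := Set.mem_iUnion.1 (hsΛ hx)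
  rw [towerB] at hj
  exact eventually_atTop.2 ⟨j, hj.1⟩

lemma length_epref (E : ℕ → ℕ) (t : ℕ) : (epref E t).length = t + 1 := by
  simp [epref]

lemma prefix_epref_s8 {E : ℕ → ℕ} {p : List ℕ} {t : ℕ} (hE : ∀ s (hs : s < p.length), E s = p[s])
    (ht : p.length ≤ t + 1) : p <+: epref E t := by
  rw [List.prefix_iff_eq_take]
  refine List.ext_getElem (by simp [length_epref]; omega) fun s hs _ => ?_
  simp [epref, hE s hs]

lemma epref_eq {E : ℕ → ℕ} {p : List ℕ} {t : ℕ} (hE : ∀ s (hs : s < p.length), E s = p[s])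
    (ht : p.length = t + 1) : epref E t = p :=
  ((prefix_epref_s8 hE ht.le).eq_of_length (by rw [length_epref, ht])).symm

lemma isEnum_nth_s8 {K : Set ℕ} (hK : K.Infinite) : IsEnum (Nat.nth (· ∈ K)) K :=
  ⟨Nat.nth_injective hK, Nat.range_nth_of_infinite hK⟩

lemma exists_isEnum_extending {S : Set ℕ} (hS : S.Infinite) {p : List ℕ} (hp : p.Nodup)
    (hpS : ∀ x ∈ p, x ∈ S) : ∃ E, IsEnum E S ∧ ∀ s (hs : s < p.length), E s = p[s] := by
  set T := S \ {x | x ∈ p}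
  have hT : T.Infinite := hS.sdiff p.finite_toSet
  obtain ⟨hTinj, hTrange⟩ := isEnum_nth_s8 hT
  have hTp : ∀ m, Nat.nth (· ∈ T) m ∉ p := fun m => (Nat.nth_mem_of_infinite hT m).2
  let E s := if hs : s < p.length then p[s] else Nat.nth (· ∈ T) (s - p.length)
  have hE_lt : ∀ s (hs : s < p.length), E s = p[s] := fun s hs => dif_pos hs
  have hE_ge : ∀ s, p.length ≤ s → E s = Nat.nth (· ∈ T) (s - p.length) :=
    fun s hs => dif_neg (not_lt.2 hs)
  refine ⟨E, ⟨fun a b hab => ?_, Set.Subset.antisymm ?_ fun x hx => ?_⟩, hE_lt⟩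
  · rcases lt_or_ge a p.length with ha | ha <;> rcases lt_or_ge b p.length with hb | hb
    · rw [hE_lt a ha, hE_lt b hb] at hab
      exact (hp.getElem_inj_iff).1 hab
    · rw [hE_lt a ha, hE_ge b hb] at hab
      exact absurd (hab ▸ List.getElem_mem ha) (hTp _)
    · rw [hE_ge a ha, hE_lt b hb] at hab
      exact absurd (hab ▸ List.getElem_mem hb) (hTp _)
    · rw [hE_ge a ha, hE_ge b hb] at hab
      have := hTinj hab
      omega
  · rintro _ ⟨s, rfl⟩
    rcases lt_or_ge s p.length with hs | hs
    · exact hE_lt s hs ▸ hpS _ (List.getElem_mem hs)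
    · exact hE_ge s hs ▸ (Nat.nth_mem_of_infinite hT _).1
  · by_cases hxp : x ∈ p
    · obtain ⟨s, hs, rfl⟩ := List.mem_iff_getElem.1 hxp
      exact ⟨s, hE_lt s hs⟩
    · obtain ⟨m, rfl⟩ : x ∈ Set.range (Nat.nth (· ∈ T)) := by
        rw [hTrange]
        exact ⟨hx, hxp⟩
      exact ⟨p.length + m, by rw [hE_ge _ (by omega), Nat.add_sub_cancel_left]⟩

lemma exists_forall_getElem_eq_of_prefix_chain {g : ℕ → List ℕ} (hg : ∀ n, g n <+: g (n + 1))
    (hlen : StrictMono fun n => (g n).length) :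
    ∃ E : ℕ → ℕ, ∀ n s (hs : s < (g n).length), E s = (g n)[s] := by
  have hmono : ∀ {m n}, m ≤ n → g m <+: g n := fun {m} {n} hmn => by
    induction n, hmn using Nat.le_induction with
    | base => exact List.prefix_refl _
    | succ n _ ih => exact ih.trans (hg n)
  have hs : ∀ s, s < (g (s + 1)).length := fun s => hlen.id_le (s + 1)
  refine ⟨fun s => (g (s + 1))[s]'(hs s), fun n s hsn => ?_⟩
  rcases le_total n (s + 1) with h | h
  · exact ((hmono h).getElem hsn).symm
  · exact (hmono h).getElem (hs s)

lemma isEnum_of_forall_getElem_eq {g : ℕ → List ℕ} {K : Set ℕ} {E : ℕ → ℕ}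
    (hE : ∀ n s (hs : s < (g n).length), E s = (g n)[s]) (hlen : ∀ s, ∃ n, s < (g n).length)
    (hnodup : ∀ n, (g n).Nodup) (hgK : ∀ n, ∀ x ∈ g n, x ∈ K) (hKg : ∀ x ∈ K, ∃ n, x ∈ g n) :
    IsEnum E K := by
  refine ⟨fun a b hab => ?_, Set.Subset.antisymm ?_ fun x hx => ?_⟩
  · obtain ⟨n, hn⟩ := hlen (max a b)
    rw [hE n a (by omega), hE n b (by omega)] at hab
    exact (hnodup n).getElem_inj_iff.1 hab
  · rintro _ ⟨s, rfl⟩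
    obtain ⟨n, hn⟩ := hlen s
    exact hE n s hn ▸ hgK n _ (List.getElem_mem hn)
  · obtain ⟨n, hn⟩ := hKg x hx
    obtain ⟨s, hs, rfl⟩ := List.mem_iff_getElem.1 hn
    exact ⟨s, hE n s hs⟩

section Adversary

variable {L : ℕ → Set ℕ} {f : List ℕ → ℕ} {Λ : ℕ → Set ℕ} {K : Set ℕ} {δ : ℝ}

lemma exists_extension_upperDensity_guess_le (hf : GuaranteesValidity L f)
    (hΛL : ∀ j, ∃ i, Λ j = L i) (hΛ : IsPerfectTower Λ K) (hdens : ∀ j, upperDensity (Λ j) K ≤ δ)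
    {p : List ℕ} (hp : p.Nodup) (hpK : ∀ x ∈ p, x ∈ K) {k : ℕ} (hk : k ∈ K) :
    ∃ q : List ℕ, q.Nodup ∧ (∀ x ∈ q, x ∈ K) ∧ p <+: q ∧ p.length < q.length ∧ k ∈ q ∧
      upperDensity (L (f q)) K ≤ δ := by
  have hkp : {x | x ∈ k :: p} ⊆ ⋃ j, towerB Λ j := by
    rw [hΛ.complete]
    rintro x (_ | ⟨_, hx⟩)
    exacts [hk, hpK x hx]
  obtain ⟨j, hj⟩ := (eventually_subset_of_subset_iUnion_towerB (List.finite_toSet _) hkp).exists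
  obtain ⟨E, hE, hEp⟩ :=
    exists_isEnum_extending (hΛ.infinite j) hp fun x hx => hj (List.mem_cons_of_mem k hx)
  obtain ⟨i, hi⟩ := hΛL j
  obtain ⟨t0, ht0⟩ := hf i E (hi ▸ hE)
  obtain ⟨s, rfl⟩ : k ∈ Set.range E := hE.2 ▸ hj List.mem_cons_self
  set t := max t0 (max p.length s)
  refine ⟨epref E t, (List.nodup_range).map hE.1, fun x hx => ?_, prefix_epref_s8 hEp (by omega),
    by rw [length_epref]; omega, ?_, ?_⟩
  · obtain ⟨r, -, rfl⟩ := List.mem_map.1 hx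
    exact (hΛ.proper j).subset (hE.2 ▸ Set.mem_range_self r)
  · exact List.mem_map.2 ⟨s, List.mem_range.2 (by omega), rfl⟩
  · exact (upperDensity_mono K (hi ▸ ht0 t (by omega))).trans (hdens j)

theorem exists_isEnum_infinite_setOf_upperDensity_guess_le (hf : GuaranteesValidity L f)
    (hΛL : ∀ j, ∃ i, Λ j = L i) (hΛ : IsPerfectTower Λ K) (hdens : ∀ j, upperDensity (Λ j) K ≤ δ) :
    ∃ E, IsEnum E K ∧ {t | upperDensity (L (f (epref E t))) K ≤ δ}.Infinite := by
  have hK : K.Infinite := (hΛ.infinite 0).mono (hΛ.proper 0).subset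
  let State := {p : List ℕ // p.Nodup ∧ ∀ x ∈ p, x ∈ K}
  have hstep (n : ℕ) (p : State) : ∃ q : State, p.1 <+: q.1 ∧ p.1.length < q.1.length ∧
      Nat.nth (· ∈ K) n ∈ q.1 ∧ upperDensity (L (f q.1)) K ≤ δ :=
    let ⟨q, hq, hqK, hpq⟩ := exists_extension_upperDensity_guess_le hf hΛL hΛ hdens p.2.1 p.2.2
      (Nat.nth_mem_of_infinite hK n)
    ⟨⟨q, hq, hqK⟩, hpq⟩
  choose next hnext using hstep
  let g (n : ℕ) : State := Nat.rec ⟨[], List.nodup_nil, by simp⟩ next n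
  have hlen : StrictMono fun n => (g n).1.length :=
    strictMono_nat_of_lt_succ fun n => (hnext n (g n)).2.1
  obtain ⟨E, hE⟩ := exists_forall_getElem_eq_of_prefix_chain (fun n => (hnext n (g n)).1) hlen
  refine ⟨E, isEnum_of_forall_getElem_eq hE (fun s => ⟨s + 1, hlen.id_le (s + 1)⟩)
    (fun n => (g n).2.1) (fun n => (g n).2.2) fun x hx => ?_, ?_⟩
  · obtain ⟨n, rfl⟩ : x ∈ Set.range (Nat.nth (· ∈ K)) := by rwa [(isEnum_nth_s8 hK).2]
    exact ⟨n + 1, (hnext n (g n)).2.2.1⟩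
  · -- round `n` ends at step `|g (n + 1)| - 1`, where the algorithm has seen exactly `g (n + 1)`
    have hpos (n : ℕ) : 0 < (g (n + 1)).1.length := (Nat.zero_le _).trans_lt (hlen n.lt_succ_self)
    have hend : StrictMono fun n => (g (n + 1)).1.length - 1 := strictMono_nat_of_lt_succ fun n => by
      have : (g (n + 1)).1.length < (g (n + 1 + 1)).1.length := hlen (n + 1).lt_succ_self
      have := hpos n
      omega
    refine Set.infinite_of_injective_forall_mem hend.injective fun n => ?_
    change upperDensity (L (f (epref E _))) K ≤ δ
    rw [epref_eq (hE (n + 1)) (by have := hpos n; omega)]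
    exact (hnext n (g n)).2.2.2

end Adversary

/-- For every valid index-based generation algorithm `f` and every `ε > 0` there is
an enumeration of `K = L z` on which `f` guesses a language of upper density at
most `τ + ε` in `K` at infinitely many steps, where `τ` is the truth index. -/
theorem stmt8 (L : ℕ → Set ℕ) (hinf : ∀ i, (L i).Infinite) (z : ℕ)
    (f : List ℕ → ℕ) (hf : GuaranteesValidity L f) (ε : ℝ) (hε : 0 < ε) :
    ∃ E : ℕ → ℕ, IsEnum E (L z) ∧
      {t : ℕ | upperDensity (L (f (epref E t))) (L z) ≤ truthIndex L z + ε}.Infinite := by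
  by_cases hτ : 1 ≤ truthIndex L z + ε
  · exact ⟨_, isEnum_nth_s8 (hinf z),
      Set.infinite_univ.mono fun t _ => (upperDensity_le_one _ _).trans hτ⟩
  · obtain ⟨Λ, hΛL, hΛ, hdens⟩ :=
      exists_perfectTower_of_truthIndex_lt (lt_add_of_pos_right _ hε) (not_le.1 hτ).le
    exact exists_isEnum_infinite_setOf_upperDensity_guess_le hf hΛL hΛ hdens
end
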